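/- arXiv:2506.06861 — 5 statements merged into one kernel-verified Lean document; each statement's English description precedes it below -/
import Mathlib

section
/- Let τ > 0, n ≥ 1, and let (x_i, y_i) ∈ ℝ^d × ℝ for i = 1,…,n. Suppose the empirical second-moment matrix S_n = (1/n)∑_{i=1}^n x_i x_iᵀ satisfies uᵀ S_n u ≤ c_u ‖u‖₂² for every u ∈ ℝ^d, where c_u > 0. Then for all β, β' ∈ ℝ^d, the empirical Huber risk 𝓛_τ satisfies ⟨∇𝓛_τ(β) − ∇𝓛_τ(β'), β − β'⟩ ≤ c_u ‖β − β'‖₂² (restricted strong smoothness of the empirical Huber risk). -/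
open Real Finset

/-- Huber score function `ψ_τ(x) = sign(x) · min(|x|, τ)`. -/
noncomputable def psiTau (τ x : ℝ) : ℝ := Real.sign x * min |x| τ

/-- Gradient of the empirical Huber risk `𝓛_τ(β) = (1/n) ∑ᵢ ℓ_τ(yᵢ − xᵢᵀβ)`, namely
`∇𝓛_τ(β) = −(1/n) ∑ᵢ ψ_τ(yᵢ − xᵢᵀβ) xᵢ`. -/
noncomputable def huberGrad {d n : ℕ} (τ : ℝ) (x : Fin n → Fin d → ℝ) (y : Fin n → ℝ)
    (β : Fin d → ℝ) : Fin d → ℝ :=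
  fun j => -(1 / (n : ℝ)) * ∑ i, psiTau τ (y i - ∑ k, x i k * β k) * x i j

lemma psiTau_eq (τ : ℝ) (hτ : 0 ≤ τ) (x : ℝ) : psiTau τ x = max (-τ) (min x τ) := by
  unfold psiTau
  rcases lt_trichotomy x 0 with h | h | h
  · rw [Real.sign_of_neg h, abs_of_neg h]
    simp only [min_def, max_def]
    split_ifs <;> linarith
  · subst h
    simp only [Real.sign_zero, zero_mul, abs_zero, min_def, max_def]
    split_ifs <;> linarith
  · rw [Real.sign_of_pos h, abs_of_pos h]
    simp only [min_def, max_def]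
    split_ifs <;> linarith

lemma psi_key (τ a b : ℝ) (hτ : 0 < τ) :
    (psiTau τ a - psiTau τ b) * (a - b) ≤ (a - b) ^ 2 := by
  rw [psiTau_eq τ hτ.le, psiTau_eq τ hτ.le]
  simp only [max_def, min_def]
  split_ifs <;> nlinarith

/-- Restricted strong smoothness of the empirical Huber risk: if the empirical
second-moment matrix satisfies `uᵀ Sₙ u ≤ c_u ‖u‖₂²` for all `u`, then
`⟨∇𝓛_τ(β) − ∇𝓛_τ(β'), β − β'⟩ ≤ c_u ‖β − β'‖₂²`. -/
theorem huber_restricted_smoothness (d n : ℕ) (τ c_u : ℝ) (hτ : 0 < τ) (hn : 1 ≤ n)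
    (hcu : 0 < c_u) (x : Fin n → Fin d → ℝ) (y : Fin n → ℝ)
    (hS : ∀ u : Fin d → ℝ,
      (1 / (n : ℝ)) * ∑ i, (∑ j, x i j * u j) ^ 2 ≤ c_u * ∑ j, (u j) ^ 2) :
    ∀ β β' : Fin d → ℝ,
      ∑ j, (huberGrad τ x y β j - huberGrad τ x y β' j) * (β j - β' j) ≤
        c_u * ∑ j, (β j - β' j) ^ 2 := by
  intro β β'
  set a : Fin n → ℝ := fun i => ∑ j, x i j * (β j - β' j) with ha
  set ψ : Fin n → ℝ := fun i => psiTau τ (y i - ∑ k, x i k * β k) with hψ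
  set ψ' : Fin n → ℝ := fun i => psiTau τ (y i - ∑ k, x i k * β' k) with hψ'
  have hL : ∑ j, (huberGrad τ x y β j - huberGrad τ x y β' j) * (β j - β' j)
      = (1 / (n : ℝ)) * ∑ i, (ψ' i - ψ i) * a i := by
    have hj : ∀ j, (huberGrad τ x y β j - huberGrad τ x y β' j) * (β j - β' j)
        = ∑ i, (1 / (n : ℝ)) * ((ψ' i - ψ i) * (x i j * (β j - β' j))) := by
      intro j
      have step : ∑ i, (1 / (n : ℝ)) * ((ψ' i - ψ i) * (x i j * (β j - β' j)))
          = (1 / (n : ℝ)) * ((∑ i, ψ' i * x i j) - ∑ i, ψ i * x i j) * (β j - β' j) := by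
        rw [← Finset.sum_sub_distrib, Finset.mul_sum, Finset.sum_mul]
        exact Finset.sum_congr rfl fun i _ => by ring
      rw [step]
      simp only [huberGrad, hψ, hψ']
      ring
    rw [Finset.sum_congr rfl fun j _ => hj j, Finset.sum_comm, Finset.mul_sum]
    refine Finset.sum_congr rfl fun i _ => ?_
    rw [← Finset.mul_sum, ← Finset.mul_sum]
  rw [hL]
  have h1 : ∀ i ∈ Finset.univ, (ψ' i - ψ i) * a i ≤ (a i) ^ 2 := by
    intro i _
    have hai : (y i - ∑ k, x i k * β' k) - (y i - ∑ k, x i k * β k) = a i := by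
      rw [show (y i - ∑ k, x i k * β' k) - (y i - ∑ k, x i k * β k)
          = ∑ k, x i k * β k - ∑ k, x i k * β' k by ring, ← Finset.sum_sub_distrib]
      exact Finset.sum_congr rfl fun k _ => by ring
    calc (ψ' i - ψ i) * a i
        = (psiTau τ (y i - ∑ k, x i k * β' k) - psiTau τ (y i - ∑ k, x i k * β k)) *
            ((y i - ∑ k, x i k * β' k) - (y i - ∑ k, x i k * β k)) := by rw [hai]
      _ ≤ ((y i - ∑ k, x i k * β' k) - (y i - ∑ k, x i k * β k)) ^ 2 := psi_key τ _ _ hτ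
      _ = (a i) ^ 2 := by rw [hai]
  calc (1 / (n : ℝ)) * ∑ i, (ψ' i - ψ i) * a i
      ≤ (1 / (n : ℝ)) * ∑ i, (a i) ^ 2 := by
        apply mul_le_mul_of_nonneg_left (Finset.sum_le_sum h1)
        positivity
    _ ≤ c_u * ∑ j, (β j - β' j) ^ 2 := hS (fun j => β j - β' j)
end

section
/- Let ζ ∈ (0,1], τ > 0, β* ∈ ℝ^d, and let x_1, …, x_n ∈ ℝ^d be fixed vectors with ‖x_i‖_∞ ≤ L for all i. Let ε_1, …, ε_n be independent real random variables with E[ε_i] = 0 and (1/n)∑_{i=1}^n E|ε_i|^{1+ζ} = v_ζ < ∞, and set y_i = x_iᵀβ* + ε_i. Then there exists an absolute constant C > 0 such that for every t > 0, with probability at least 1 − 2d·e^{−t}, the gradient of the empirical Huber risk at β* satisfies ‖∇𝓛_τ(β*)‖_∞ ≤ C·( L·√(v_ζ · τ^{1−ζ} · t / n) + L·τ·t/n + L·v_ζ·τ^{−ζ} ). -/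
/-!
Write `ψ = psiTau τ`. The gradient coordinate `j` is `-(1/n) ∑ᵢ ψ(εᵢ) xᵢⱼ`. Each summand is
bounded by `Lτ`, its second moment is at most `L² τ^{1-ζ} E|εᵢ|^{1+ζ}` because
`min(|x|, τ)² ≤ τ^{1-ζ} |x|^{1+ζ}`, and since `E εᵢ = 0` its mean is at most
`L τ^{-ζ} E|εᵢ|^{1+ζ}` because `|x - ψ(x)| ≤ τ^{-ζ} |x|^{1+ζ}`. Bernstein's inequality for the
centred summands, proved through the bound `E e^{sZ} ≤ e^{s² E Z²}` for `s|Z| ≤ 1`, together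
with the bias bound controls one coordinate outside an event of probability `2e^{-t}`. A
union bound over the `d` coordinates then gives the claim with `C = 4`.
-/

open Real Finset MeasureTheory ProbabilityTheory

section HuberScore

variable {τ ζ : ℝ}

lemma min_sq_le_rpow {a : ℝ} (ha : 0 ≤ a) (hτ : 0 ≤ τ) (hζ₀ : -1 ≤ ζ) (hζ₁ : ζ ≤ 1) :
    min a τ ^ 2 ≤ τ ^ (1 - ζ) * a ^ (1 + ζ) := by
  have hm : 0 ≤ min a τ := le_min ha hτ
  calc min a τ ^ 2 = min a τ ^ (1 - ζ) * min a τ ^ (1 + ζ) := by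
        rw [← rpow_add_of_nonneg hm (by linarith) (by linarith)]; norm_num
    _ ≤ τ ^ (1 - ζ) * a ^ (1 + ζ) := by
        gcongr <;> linarith [min_le_left a τ, min_le_right a τ]

lemma sub_min_le_rpow {a : ℝ} (ha : 0 ≤ a) (hτ : 0 < τ) (hζ : 0 ≤ ζ) :
    a - min a τ ≤ τ ^ (-ζ) * a ^ (1 + ζ) := by
  rcases le_total a τ with h | h
  · rw [min_eq_left h, sub_self]; positivity
  · have ha : 0 < a := hτ.trans_le h
    calc a - min a τ ≤ a := by linarith [le_min ha.le hτ.le]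
      _ = τ ^ (-ζ) * τ ^ ζ * a := by rw [← rpow_add hτ]; simp
      _ ≤ τ ^ (-ζ) * a ^ ζ * a := by gcongr
      _ = τ ^ (-ζ) * a ^ (1 + ζ) := by rw [rpow_add ha, rpow_one]; ring

lemma measurable_psiTau : Measurable (psiTau τ) :=
  Measurable.mul (measurable_const.ite measurableSet_Iio
    (measurable_const.ite measurableSet_Ioi measurable_const)) (by fun_prop)

lemma abs_psiTau (hτ : 0 ≤ τ) (x : ℝ) : |psiTau τ x| = min |x| τ := by
  rcases lt_trichotomy x 0 with h | rfl | h
  · simp [psiTau, Real.sign_of_neg h, hτ]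
  · simp [psiTau, hτ]
  · simp [psiTau, Real.sign_of_pos h, hτ]

lemma abs_psiTau_le (hτ : 0 ≤ τ) (x : ℝ) : |psiTau τ x| ≤ τ :=
  (abs_psiTau hτ x).trans_le (min_le_right _ _)

lemma abs_sub_psiTau (hτ : 0 ≤ τ) (x : ℝ) : |x - psiTau τ x| = |x| - min |x| τ := by
  rcases lt_trichotomy x 0 with h | rfl | h
  · rw [psiTau, Real.sign_of_neg h, abs_of_neg h, abs_of_nonpos] <;>
      linarith [min_le_left (-x) τ]
  · simp [psiTau, hτ]
  · rw [psiTau, Real.sign_of_pos h, abs_of_pos h, abs_of_nonneg] <;>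
      linarith [min_le_left x τ]

variable {Ω : Type*} {mΩ : MeasurableSpace Ω} {μ : Measure Ω} {X : Ω → ℝ}

lemma integrable_psiTau_comp [IsFiniteMeasure μ] (hτ : 0 ≤ τ) (hX : AEMeasurable X μ) :
    Integrable (fun ω => psiTau τ (X ω)) μ :=
  .of_bound (measurable_psiTau.comp_aemeasurable hX).aestronglyMeasurable τ
    (.of_forall fun _ => abs_psiTau_le hτ _)

lemma integral_psiTau_sq_le (hτ : 0 ≤ τ) (hζ₀ : -1 ≤ ζ) (hζ₁ : ζ ≤ 1)
    (hX : Integrable (fun ω => |X ω| ^ (1 + ζ)) μ) :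
    μ[fun ω => psiTau τ (X ω) ^ 2] ≤ τ ^ (1 - ζ) * μ[fun ω => |X ω| ^ (1 + ζ)] := by
  rw [← integral_const_mul]
  refine integral_mono_of_nonneg (.of_forall fun _ => sq_nonneg _) (hX.const_mul _)
    (.of_forall fun ω => ?_)
  dsimp only
  rw [← sq_abs, abs_psiTau hτ]
  exact min_sq_le_rpow (abs_nonneg _) hτ hζ₀ hζ₁

lemma variance_psiTau_comp_le [IsProbabilityMeasure μ] (hτ : 0 ≤ τ) (hζ₀ : -1 ≤ ζ)
    (hζ₁ : ζ ≤ 1) (hX : AEMeasurable X μ) (hX' : Integrable (fun ω => |X ω| ^ (1 + ζ)) μ) :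
    Var[fun ω => psiTau τ (X ω); μ] ≤ τ ^ (1 - ζ) * μ[fun ω => |X ω| ^ (1 + ζ)] :=
  (variance_le_expectation_sq
    (measurable_psiTau.comp_aemeasurable hX).aestronglyMeasurable).trans
    (integral_psiTau_sq_le hτ hζ₀ hζ₁ hX')

lemma abs_psiTau_sub_integral_le [IsProbabilityMeasure μ] (hτ : 0 ≤ τ) (x : ℝ) :
    |psiTau τ x - μ[fun ω => psiTau τ (X ω)]| ≤ 2 * τ := by
  have hc : |μ[fun ω => psiTau τ (X ω)]| ≤ τ := by
    simpa using norm_integral_le_of_norm_le_const (μ := μ)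
      (.of_forall fun ω => (Real.norm_eq_abs _).trans_le (abs_psiTau_le hτ (X ω)))
  linarith [abs_sub (psiTau τ x) μ[fun ω => psiTau τ (X ω)], abs_psiTau_le hτ x]

lemma abs_integral_psiTau_le_s3 [IsFiniteMeasure μ] (hτ : 0 < τ) (hζ : 0 ≤ ζ)
    (hX : Integrable X μ) (hX' : Integrable (fun ω => |X ω| ^ (1 + ζ)) μ) (hmean : μ[X] = 0) :
    |μ[fun ω => psiTau τ (X ω)]| ≤ τ ^ (-ζ) * μ[fun ω => |X ω| ^ (1 + ζ)] := by
  have hψ := integrable_psiTau_comp hτ.le hX.aemeasurable (μ := μ)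
  have hbias : μ[fun ω => X ω - psiTau τ (X ω)] = -μ[fun ω => psiTau τ (X ω)] := by
    rw [integral_sub hX hψ, hmean, zero_sub]
  rw [← abs_neg, ← hbias, ← Real.norm_eq_abs, ← integral_const_mul]
  refine norm_integral_le_of_norm_le (hX'.const_mul _) (.of_forall fun ω => ?_)
  rw [Real.norm_eq_abs, abs_sub_psiTau hτ.le]
  exact sub_min_le_rpow (abs_nonneg _) hτ hζ

end HuberScore

/-- The witness is `s = min (1 / M) √(t / V)`. -/
lemma exists_chernoff_parameter {M V t : ℝ} (hM : 0 < M) (ht : 0 ≤ t) :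
    ∃ s, 0 ≤ s ∧ s * M ≤ 1 ∧ -s * (2 * √(V * t) + 2 * M * t) + s ^ 2 * V ≤ -t := by
  rcases le_or_gt V (M ^ 2 * t) with hV | hV
  · refine ⟨1 / M, by positivity, by field_simp; rfl, ?_⟩
    have : (1 / M) ^ 2 * V ≤ t := by
      calc (1 / M) ^ 2 * V ≤ (1 / M) ^ 2 * (M ^ 2 * t) := by gcongr
        _ = t := by field_simp
    have : 0 ≤ 1 / M * √(V * t) := by positivity
    have : 1 / M * (M * t) = t := by field_simp
    nlinarith
  · have hV₀ : 0 < V := lt_of_le_of_lt (by positivity) hV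
    refine ⟨√(t / V), by positivity, ?_, ?_⟩
    · calc √(t / V) * M = √(t / V * M ^ 2) := by
            rw [sqrt_mul (by positivity), sqrt_sq hM.le]
        _ ≤ √1 := by
            gcongr
            rw [div_mul_eq_mul_div, div_le_one hV₀]; linarith
        _ = 1 := sqrt_one
    · have hsq : √(t / V) ^ 2 * V = t := by rw [sq_sqrt (by positivity)]; field_simp
      have hprod : √(t / V) * √(V * t) = t := by
        rw [← sqrt_mul (by positivity), show t / V * (V * t) = t ^ 2 by field_simp,
          sqrt_sq ht]
      have : 0 ≤ √(t / V) * (M * t) := by positivity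
      nlinarith

section Bernstein

variable {Ω : Type*} {mΩ : MeasurableSpace Ω} {μ : Measure Ω} [IsProbabilityMeasure μ]

lemma mgf_le_exp_sq_mul_integral_sq {Z : Ω → ℝ} {M s : ℝ} (hZ : Measurable Z)
    (hbdd : ∀ ω, |Z ω| ≤ M) (hmean : μ[Z] = 0) (hs : 0 ≤ s) (hsM : s * M ≤ 1) :
    mgf Z μ s ≤ exp (s ^ 2 * μ[Z ^ 2]) := by
  have hsZ : ∀ ω, |s * Z ω| ≤ 1 := fun ω => by
    rw [abs_mul, abs_of_nonneg hs]; exact (mul_le_mul_of_nonneg_left (hbdd ω) hs).trans hsM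
  have hZint : Integrable Z μ := .of_bound hZ.aestronglyMeasurable M (.of_forall hbdd)
  have hZ2int : Integrable (Z ^ 2) μ :=
    .of_bound (hZ.pow_const 2).aestronglyMeasurable (M ^ 2) (.of_forall fun ω => by
      simpa [abs_pow] using pow_le_pow_left₀ (abs_nonneg _) (hbdd ω) 2)
  have hlin : Integrable (fun ω => 1 + s * Z ω) μ := (integrable_const 1).add (hZint.const_mul s)
  calc mgf Z μ s ≤ ∫ ω, (1 + s * Z ω + s ^ 2 * (Z ^ 2) ω) ∂μ := by
        refine integral_mono_of_nonneg (.of_forall fun _ => (exp_pos _).le)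
          (hlin.add (hZ2int.const_mul _)) (.of_forall fun ω => ?_)
        have := abs_exp_sub_one_sub_id_le (hsZ ω)
        simp only [Pi.pow_apply]
        linarith [le_abs_self (exp (s * Z ω) - 1 - s * Z ω), mul_pow s (Z ω) 2]
    _ = 1 + s ^ 2 * μ[Z ^ 2] := by
        rw [integral_add hlin (hZ2int.const_mul _),
          integral_add (integrable_const 1) (hZint.const_mul s), integral_const_mul,
          integral_const_mul, hmean]
        simp
    _ ≤ exp (s ^ 2 * μ[Z ^ 2]) := by linarith [add_one_le_exp (s ^ 2 * μ[Z ^ 2])]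

variable {ι : Type*} [Fintype ι] {Z : ι → Ω → ℝ} {M V t : ℝ}

lemma measureReal_sum_ge_le_of_abs_le (hmeas : ∀ i, Measurable (Z i))
    (hbdd : ∀ i ω, |Z i ω| ≤ M) (hmean : ∀ i, μ[Z i] = 0) (hindep : iIndepFun Z μ)
    (hV : ∑ i, μ[Z i ^ 2] ≤ V) {q s : ℝ} (hs : 0 ≤ s) (hsM : s * M ≤ 1) :
    μ.real {ω | q ≤ ∑ i, Z i ω} ≤ exp (-s * q + s ^ 2 * V) := by
  have hexp : ∀ i ∈ (univ : Finset ι), Integrable (fun ω => exp (s * Z i ω)) μ :=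
    fun i _ => .of_bound ((hmeas i).const_mul s).exp.aestronglyMeasurable (exp 1)
      (.of_forall fun ω => by
        rw [norm_of_nonneg (exp_pos _).le, exp_le_exp]
        exact (mul_le_mul_of_nonneg_left ((le_abs_self _).trans (hbdd i ω)) hs).trans hsM)
  calc μ.real {ω | q ≤ ∑ i, Z i ω} ≤ exp (-s * q) * mgf (∑ i, Z i) μ s := by
        simpa [Finset.sum_apply] using
          measure_ge_le_exp_mul_mgf q hs (hindep.integrable_exp_mul_sum hmeas hexp)
    _ ≤ exp (-s * q) * exp (s ^ 2 * V) := by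
        rw [hindep.mgf_sum hmeas]
        gcongr
        calc ∏ i, mgf (Z i) μ s ≤ ∏ i, exp (s ^ 2 * μ[Z i ^ 2]) :=
              prod_le_prod (fun i _ => mgf_nonneg) fun i _ =>
                mgf_le_exp_sq_mul_integral_sq (hmeas i) (hbdd i) (hmean i) hs hsM
          _ = exp (s ^ 2 * ∑ i, μ[Z i ^ 2]) := by rw [← exp_sum, mul_sum]
          _ ≤ exp (s ^ 2 * V) := by gcongr
    _ = exp (-s * q + s ^ 2 * V) := (exp_add _ _).symm

theorem bernstein_measureReal_sum_ge_le (hM : 0 < M) (hmeas : ∀ i, Measurable (Z i))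
    (hbdd : ∀ i ω, |Z i ω| ≤ M) (hmean : ∀ i, μ[Z i] = 0) (hindep : iIndepFun Z μ)
    (hV : ∑ i, μ[Z i ^ 2] ≤ V) (ht : 0 ≤ t) :
    μ.real {ω | 2 * √(V * t) + 2 * M * t ≤ ∑ i, Z i ω} ≤ exp (-t) := by
  obtain ⟨s, hs, hsM, hst⟩ := exists_chernoff_parameter (V := V) hM ht
  exact (measureReal_sum_ge_le_of_abs_le hmeas hbdd hmean hindep hV hs hsM).trans
    (exp_le_exp.2 hst)

theorem bernstein_measureReal_abs_sum_ge_le (hM : 0 < M) (hmeas : ∀ i, Measurable (Z i))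
    (hbdd : ∀ i ω, |Z i ω| ≤ M) (hmean : ∀ i, μ[Z i] = 0) (hindep : iIndepFun Z μ)
    (hV : ∑ i, μ[Z i ^ 2] ≤ V) (ht : 0 ≤ t) :
    μ.real {ω | 2 * √(V * t) + 2 * M * t ≤ |∑ i, Z i ω|} ≤ 2 * exp (-t) := by
  have hupper := bernstein_measureReal_sum_ge_le hM hmeas hbdd hmean hindep hV ht
  have hlower : μ.real {ω | 2 * √(V * t) + 2 * M * t ≤ ∑ i, -Z i ω} ≤ exp (-t) :=
    bernstein_measureReal_sum_ge_le hM (fun i => (hmeas i).neg)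
      (fun i ω => (abs_neg (Z i ω)).trans_le (hbdd i ω))
      (fun i => (integral_neg (Z i)).trans (neg_eq_zero.2 (hmean i)))
      (hindep.comp (fun _ => Neg.neg) fun _ => measurable_neg)
      (by simpa only [Pi.pow_apply, Pi.neg_apply, neg_sq] using hV) ht
  calc μ.real {ω | 2 * √(V * t) + 2 * M * t ≤ |∑ i, Z i ω|}
      ≤ μ.real ({ω | 2 * √(V * t) + 2 * M * t ≤ ∑ i, Z i ω} ∪
          {ω | 2 * √(V * t) + 2 * M * t ≤ ∑ i, -Z i ω}) := by
        refine measureReal_mono fun ω hω => ?_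
        simpa only [Set.mem_union, Set.mem_ofPred_eq, sum_neg_distrib, le_abs] using hω
    _ ≤ 2 * exp (-t) := (measureReal_union_le _ _).trans (by linarith)

end Bernstein

section Concentration

variable {Ω : Type*} {mΩ : MeasurableSpace Ω} {μ : Measure Ω} [IsProbabilityMeasure μ]

lemma one_sub_card_mul_le_measureReal_forall {ι : Type*} [Fintype ι] {P : ι → Ω → Prop}
    {δ : ℝ} (h : ∀ j, μ.real {ω | ¬ P j ω} ≤ δ) :
    1 - Fintype.card ι * δ ≤ μ.real {ω | ∀ j, P j ω} := by
  have hcover := measureReal_union_le (μ := μ) {ω | ∀ j, P j ω} {ω | ∀ j, P j ω}ᶜ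
  rw [Set.union_compl_self, probReal_univ, Set.compl_ofPred] at hcover
  have hbad : μ.real {ω | ¬ ∀ j, P j ω} ≤ Fintype.card ι * δ := by
    calc μ.real {ω | ¬ ∀ j, P j ω} = μ.real (⋃ j, {ω | ¬ P j ω}) := by
          congr 1; ext; simp
      _ ≤ ∑ j, μ.real {ω | ¬ P j ω} := measureReal_iUnion_fintype_le _
      _ ≤ Fintype.card ι * δ := by simpa using sum_le_sum fun j (_ : j ∈ univ) => h j
  linarith

variable {ι : Type*} [Fintype ι] {ε : ι → Ω → ℝ} {a : ι → ℝ} {τ ζ L S t : ℝ}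

theorem measureReal_abs_sum_psiTau_mul_ge_le (hτ : 0 < τ) (hζ₀ : 0 ≤ ζ) (hζ₁ : ζ ≤ 1)
    (hL : 0 < L) (ha : ∀ i, |a i| ≤ L) (hmeas : ∀ i, Measurable (ε i))
    (hindep : iIndepFun ε μ) (hint : ∀ i, Integrable (ε i) μ)
    (hint' : ∀ i, Integrable (fun ω => |ε i ω| ^ (1 + ζ)) μ) (hmean : ∀ i, μ[ε i] = 0)
    (hS : ∑ i, μ[fun ω => |ε i ω| ^ (1 + ζ)] ≤ S) (ht : 0 ≤ t) :
    μ.real {ω | 2 * √(L ^ 2 * τ ^ (1 - ζ) * S * t) + 2 * (2 * L * τ) * t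
      + L * τ ^ (-ζ) * S ≤ |∑ i, psiTau τ (ε i ω) * a i|} ≤ 2 * exp (-t) := by
  set m : ι → ℝ := fun i => μ[fun ω => |ε i ω| ^ (1 + ζ)]
  set c : ι → ℝ := fun i => μ[fun ω => psiTau τ (ε i ω)]
  -- Bernstein controls the centred sum `∑ Z i`; the means `c i * a i` add up to the bias.
  set Z : ι → Ω → ℝ := fun i ω => (psiTau τ (ε i ω) - c i) * a i
  have hZbdd : ∀ i ω, |Z i ω| ≤ 2 * L * τ := fun i ω =>
    (abs_mul _ _).trans_le ((mul_le_mul (abs_psiTau_sub_integral_le hτ.le _) (ha i)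
      (abs_nonneg _) (by positivity)).trans_eq (by ring))
  have hZmean : ∀ i, μ[Z i] = 0 := fun i => by
    rw [integral_mul_const, integral_sub (integrable_psiTau_comp hτ.le (hint i).aemeasurable)
      (integrable_const _), integral_const]
    simp [c]
  have hZvar : ∀ i, μ[Z i ^ 2] ≤ L ^ 2 * τ ^ (1 - ζ) * m i := fun i => by
    have hvar := variance_psiTau_comp_le hτ.le (by linarith) hζ₁ (hint i).aemeasurable (hint' i)
    rw [variance_eq_integral (X := fun ω => psiTau τ (ε i ω))
      (measurable_psiTau.comp (hmeas i)).aemeasurable] at hvar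
    simp only [Z, Pi.pow_apply, mul_pow]
    rw [integral_mul_const]
    calc _ ≤ τ ^ (1 - ζ) * m i * L ^ 2 :=
          mul_le_mul hvar (sq_le_sq.2 ((ha i).trans_eq (abs_of_pos hL).symm)) (sq_nonneg _)
            (by positivity)
      _ = L ^ 2 * τ ^ (1 - ζ) * m i := by ring
  have hcentred := bernstein_measureReal_abs_sum_ge_le (V := L ^ 2 * τ ^ (1 - ζ) * S)
    (by positivity : 0 < 2 * L * τ)
    (fun i => ((measurable_psiTau.comp (hmeas i)).sub_const _).mul_const _) hZbdd hZmean
    (hindep.comp (fun i z => (psiTau τ z - c i) * a i) fun i =>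
      (measurable_psiTau.sub_const _).mul_const _)
    ((sum_le_sum fun i _ => hZvar i).trans (by rw [← mul_sum]; gcongr)) ht
  have hbias : |∑ i, c i * a i| ≤ L * τ ^ (-ζ) * S := by
    refine (abs_sum_le_sum_abs _ _).trans ((sum_le_sum fun i _ => ?_).trans
      (by rw [← mul_sum]; gcongr))
    rw [abs_mul, mul_comm L, mul_right_comm]
    exact mul_le_mul (abs_integral_psiTau_le_s3 hτ hζ₀ (hint i) (hint' i) (hmean i)) (ha i)
      (abs_nonneg _) (by positivity)
  refine le_trans (measureReal_mono fun ω hω => ?_) hcentred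
  simp only [Set.mem_ofPred_eq, Function.comp_apply, sub_mul, sum_sub_distrib] at hω ⊢
  linarith [abs_sub_abs_le_abs_sub (∑ i, psiTau τ (ε i ω) * a i) (∑ i, c i * a i)]

end Concentration

lemma bernstein_radius_le {n v L p r τ t : ℝ} (hn : 0 < n) (hv : 0 ≤ v) (hL : 0 ≤ L)
    (hr : 0 ≤ r) :
    2 * √(L ^ 2 * p * (n * v) * t) + 2 * (2 * L * τ) * t + L * r * (n * v)
      ≤ n * (4 * (L * √(v * p * t / n) + L * τ * t / n + L * v * r)) := by
  have hsqrt : √(L ^ 2 * p * (n * v) * t) = n * L * √(v * p * t / n) := by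
    rw [show L ^ 2 * p * (n * v) * t = (n * L) ^ 2 * (v * p * t / n) by field_simp,
      sqrt_mul (sq_nonneg _), sqrt_sq (by positivity)]
  rw [hsqrt]
  have : 0 ≤ n * L * √(v * p * t / n) := by positivity
  have : 0 ≤ n * (L * v * r) := by positivity
  field_simp
  nlinarith

/-- ℓ∞ bound on the gradient of the empirical Huber risk at the true parameter: for fixed
covariates with `‖xᵢ‖_∞ ≤ L` and independent zero-mean noise with average `(1+ζ)`-th
moment `v_ζ`, there is an absolute constant `C > 0` such that for every `t > 0`, with
probability at least `1 − 2d·e^{−t}`,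
`‖∇𝓛_τ(β*)‖_∞ ≤ C(L√(v_ζ τ^{1−ζ} t/n) + Lτt/n + L v_ζ τ^{−ζ})`. -/
theorem huber_gradient_linf_concentration :
    ∃ C : ℝ, 0 < C ∧
    ∀ (d n : ℕ) (ζ τ L vζ : ℝ) (βstar : Fin d → ℝ)
      (x : Fin n → Fin d → ℝ)
      (Ω : Type) (_mΩ : MeasurableSpace Ω) (μ : Measure Ω)
      (ε : Fin n → Ω → ℝ),
      IsProbabilityMeasure μ →
      1 ≤ n → ζ ∈ Set.Ioc (0 : ℝ) 1 → 0 < τ → 0 < L →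
      (∀ i j, |x i j| ≤ L) →
      (∀ i, Measurable (ε i)) →
      iIndepFun ε μ →
      (∀ i, Integrable (ε i) μ) →
      (∀ i, Integrable (fun ω => |ε i ω| ^ (1 + ζ)) μ) →
      (∀ i, ∫ ω, ε i ω ∂μ = 0) →
      (1 / (n : ℝ)) * ∑ i, ∫ ω, |ε i ω| ^ (1 + ζ) ∂μ = vζ →
      ∀ t : ℝ, 0 < t →
        1 - 2 * (d : ℝ) * Real.exp (-t) ≤
          (μ {ω | ∀ j : Fin d,
            |-(1 / (n : ℝ)) *
                ∑ i, psiTau τ ((∑ k, x i k * βstar k) + ε i ω - ∑ k, x i k * βstar k) *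
                  x i j| ≤
              C * (L * Real.sqrt (vζ * τ ^ (1 - ζ) * t / n) + L * τ * t / n
                + L * vζ * τ ^ (-ζ))}).toReal := by
  refine ⟨4, by norm_num, ?_⟩
  intro d n ζ τ L vζ βstar x Ω _ μ ε _ hn ⟨hζ₀, hζ₁⟩ hτ hL hx hmeas hindep hint hint' hmean hv
    t ht
  have hn₀ : (0 : ℝ) < n := by exact_mod_cast hn
  have hS : ∑ i, μ[fun ω => |ε i ω| ^ (1 + ζ)] = n * vζ := by rw [← hv]; field_simp
  have hv₀ : 0 ≤ vζ := hv ▸ mul_nonneg (by positivity)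
    (sum_nonneg fun i _ => integral_nonneg fun ω => by positivity)
  have hradius := bernstein_radius_le (p := τ ^ (1 - ζ)) (τ := τ) (t := t) hn₀ hv₀ hL.le
    (rpow_nonneg hτ.le (-ζ))
  have hcard : 1 - 2 * (d : ℝ) * exp (-t) = 1 - Fintype.card (Fin d) * (2 * exp (-t)) := by
    rw [Fintype.card_fin]; ring
  simp only [add_sub_cancel_left]
  refine hcard.trans_le <| one_sub_card_mul_le_measureReal_forall fun j =>
    le_trans (measureReal_mono fun ω hω => ?_)
      (measureReal_abs_sum_psiTau_mul_ge_le hτ hζ₀.le hζ₁ hL (fun i => hx i j) hmeas hindep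
        hint hint' hmean hS.le ht.le)
  simp only [Set.mem_ofPred_eq, not_le, abs_mul, abs_neg, abs_div, abs_one, Nat.abs_cast] at hω ⊢
  rw [one_div_mul_eq_div, lt_div_iff₀ hn₀] at hω
  linarith
end

section
/- Let I be a finite index set with |I| > s ≥ 1, let v ∈ ℝ^I, and let w_1, …, w_s ∈ ℝ^I be noise vectors. Let S = {j_1, …, j_s} ⊆ I be selected greedily: for each i = 1,…,s, j_i maximizes |v_j| + w_i(j) over j ∈ I \ {j_1,…,j_{i−1}}, and define P̃_s(v) ∈ ℝ^I by (P̃_s(v))_j = v_j for j ∈ S and 0 otherwise. Then for every v̂ ∈ ℝ^I with at most ŝ nonzero entries, where ŝ ≤ s, and every c > 0: ‖P̃_s(v) − v‖₂² ≤ (1 + 1/c) · ((|I| − s)/(|I| − ŝ)) · ‖v̂ − v‖₂² + 4(1 + c)·∑_{i=1}^s ‖w_i‖_∞². -/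
open Finset

/-- AM-GM style splitting of a square of a sum. -/
lemma peeling_amgm (a b c : ℝ) (hc : 0 < c) :
    (a + b) ^ 2 ≤ (1 + 1 / c) * a ^ 2 + (1 + c) * b ^ 2 := by
  have h : 0 ≤ (1 / c) * (a - c * b) ^ 2 := by positivity
  have h2 : (1 / c) * (a - c * b) ^ 2 = (1 / c) * a ^ 2 - 2 * a * b + c * b ^ 2 := by
    field_simp; ring
  nlinarith [h, h2]

set_option maxHeartbeats 1000000 in
/-- Utility guarantee for the noisy iterative hard-thresholding (peeling) selection: if
`S = {j_1, …, j_s}` is selected greedily (each `j_i` maximizes `|v_j| + w_i(j)` over the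
remaining indices) and `P̃_s(v)` keeps `v` on `S` and zeroes it elsewhere, then for every
`ŝ`-sparse `v̂` with `ŝ ≤ s` and every `c > 0`,
`‖P̃_s(v) − v‖₂² ≤ (1 + 1/c)·((|I|−s)/(|I|−ŝ))·‖v̂ − v‖₂² + 4(1+c)∑ᵢ‖wᵢ‖_∞²`. -/
theorem peeling_utility {I : Type*} [Fintype I] [DecidableEq I]
    (s shat : ℕ) (hs : 1 ≤ s) (hcard : s < Fintype.card I)
    (v vhat : I → ℝ) (w : Fin s → I → ℝ) (jsel : Fin s → I)
    (hinj : Function.Injective jsel)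
    (hmax : ∀ i : Fin s, ∀ k : I, (∀ i' : Fin s, i' < i → jsel i' ≠ k) →
      |v k| + w i k ≤ |v (jsel i)| + w i (jsel i))
    (hshat : shat ≤ s)
    (hvhat : (Finset.univ.filter fun j => vhat j ≠ 0).card ≤ shat)
    (c : ℝ) (hc : 0 < c) :
    ∑ j, ((if j ∈ Finset.image jsel Finset.univ then v j else 0) - v j) ^ 2 ≤
      (1 + 1 / c) * (((Fintype.card I : ℝ) - s) / ((Fintype.card I : ℝ) - shat)) *
          ∑ j, (vhat j - v j) ^ 2
        + 4 * (1 + c) * ∑ i, (⨆ j, |w i j|) ^ 2 := by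
  classical
  have hI : Nonempty I := Fintype.card_pos_iff.mp (Nat.lt_of_le_of_lt (Nat.zero_le _) hcard)
  set S : Finset I := Finset.image jsel Finset.univ with hSdef
  set T : Finset I := Finset.univ.filter (fun j => vhat j ≠ 0) with hTdef
  set N : Fin s → ℝ := fun i => ⨆ j, |w i j| with hNdef
  have hNle : ∀ i k, |w i k| ≤ N i := fun i k =>
    le_ciSup (f := fun j => |w i j|) (Set.Finite.bddAbove (Set.finite_range _)) k
  have hN0 : ∀ i, 0 ≤ N i := fun i =>
    le_trans (abs_nonneg _) (hNle i (Classical.arbitrary I))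
  -- the LHS equals the sum over Sᶜ of v j ^ 2
  have hLHS : ∑ j, ((if j ∈ S then v j else 0) - v j) ^ 2 = ∑ j ∈ Sᶜ, v j ^ 2 := by
    rw [← Finset.sum_compl_add_sum S (fun j => ((if j ∈ S then v j else 0) - v j) ^ 2)]
    have h1 : ∀ j ∈ Sᶜ, ((if j ∈ S then v j else 0) - v j) ^ 2 = v j ^ 2 := fun j hj => by
      rw [if_neg (Finset.mem_compl.mp hj)]; ring
    have h2 : ∀ j ∈ S, ((if j ∈ S then v j else 0) - v j) ^ 2 = 0 := fun j hj => by
      rw [if_pos hj]; ring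
    rw [Finset.sum_congr rfl h1, Finset.sum_congr rfl h2, Finset.sum_const_zero, add_zero]
  -- key pointwise bound
  have key : ∀ j ∉ S, ∀ i : Fin s,
      v j ^ 2 ≤ (1 + 1 / c) * v (jsel i) ^ 2 + 4 * (1 + c) * N i ^ 2 := by
    intro j hj i
    have h1 : |v j| + w i j ≤ |v (jsel i)| + w i (jsel i) := by
      refine hmax i j (fun i' _ hne => hj ?_)
      rw [← hne]; exact Finset.mem_image_of_mem _ (Finset.mem_univ _)
    have hw1 := (abs_le.mp (hNle i j)).1
    have hw2 := (abs_le.mp (hNle i (jsel i))).2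
    have h2 : |v j| ≤ |v (jsel i)| + 2 * N i := by linarith
    have h3 : (|v j|) ^ 2 ≤ (|v (jsel i)| + 2 * N i) ^ 2 := by
      have := abs_nonneg (v j)
      nlinarith
    have h4 := peeling_amgm (|v (jsel i)|) (2 * N i) c hc
    calc v j ^ 2 = (|v j|) ^ 2 := (sq_abs _).symm
      _ ≤ (|v (jsel i)| + 2 * N i) ^ 2 := h3
      _ ≤ (1 + 1 / c) * (|v (jsel i)|) ^ 2 + (1 + c) * (2 * N i) ^ 2 := h4
      _ = (1 + 1 / c) * v (jsel i) ^ 2 + 4 * (1 + c) * N i ^ 2 := by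
          rw [sq_abs]; ring
  -- cardinalities
  have hScard : S.card = s := by
    rw [hSdef, Finset.card_image_of_injective _ hinj, Finset.card_univ, Fintype.card_fin]
  have hTcard : T.card ≤ shat := hvhat
  set F : Finset (Fin s) := Finset.univ.filter (fun i => jsel i ∉ T) with hFdef
  have hFsel : ∀ i ∈ F, jsel i ∉ T := fun i hi => (Finset.mem_filter.mp hi).2
  have hFcard : (s - shat) + (T \ S).card ≤ F.card := by
    have hpart : (Finset.univ.filter (fun i => jsel i ∈ T)).card + F.card = s := by
      rw [hFdef]
      rw [Finset.card_filter_add_card_filter_not (p := fun i => jsel i ∈ T)]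
      simp
    have himg : Finset.image jsel (Finset.univ.filter (fun i => jsel i ∈ T)) = S ∩ T := by
      ext j
      simp only [Finset.mem_image, Finset.mem_filter, Finset.mem_univ, true_and,
        Finset.mem_inter, hSdef]
      constructor
      · rintro ⟨i, hiT, rfl⟩
        exact ⟨⟨i, rfl⟩, hiT⟩
      · rintro ⟨⟨i, rfl⟩, hjT⟩
        exact ⟨i, hjT, rfl⟩
    have hfc : (Finset.univ.filter (fun i => jsel i ∈ T)).card = (S ∩ T).card := by
      rw [← himg, Finset.card_image_of_injective _ hinj]
    have h1 : (T \ S).card + (T ∩ S).card = T.card := Finset.card_sdiff_add_card_inter T S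
    have h2 : (S ∩ T).card = (T ∩ S).card := by rw [Finset.inter_comm]
    omega
  -- injection from T \ S into F
  have hcardle : Fintype.card ↥(T \ S) ≤ Fintype.card ↥F := by
    simp only [Fintype.card_coe]; omega
  obtain ⟨φ⟩ := Function.Embedding.nonempty_of_card_le hcardle
  set P : Finset (Fin s) := Finset.image (fun x => (φ x : Fin s)) (T \ S).attach with hPdef
  have hφinj : Function.Injective (fun x : ↥(T \ S) => (φ x : Fin s)) :=
    fun a b hab => φ.injective (Subtype.val_injective hab)
  have hPsub : P ⊆ F := by
    intro i hi
    obtain ⟨x, -, rfl⟩ := Finset.mem_image.mp hi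
    exact (φ x).2
  have hPcard : P.card = (T \ S).card := by
    rw [hPdef, Finset.card_image_of_injective _ hφinj, Finset.card_attach]
  -- choose Q ⊆ F \ P with card s - shat
  obtain ⟨Q, hQsub, hQcard⟩ : ∃ Q ⊆ F \ P, Q.card = s - shat := by
    apply Finset.exists_subset_card_eq
    rw [Finset.card_sdiff_of_subset hPsub]; omega
  have hPQdisj : Disjoint P Q :=
    Finset.disjoint_left.mpr (fun i hiP hiQ => (Finset.mem_sdiff.mp (hQsub hiQ)).2 hiP)
  have hQF : Q ⊆ F := hQsub.trans (Finset.sdiff_subset)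
  -- abbreviations for the sums
  set L : ℝ := ∑ j ∈ Sᶜ, v j ^ 2 with hLdef
  set A1 : ℝ := ∑ j ∈ Sᶜ \ T, v j ^ 2 with hA1def
  set A2 : ℝ := ∑ j ∈ T \ S, v j ^ 2 with hA2def
  set W : ℝ := ∑ j, (vhat j - v j) ^ 2 with hWdef
  set Z : ℝ := ∑ i, N i ^ 2 with hZdef
  have hsplit : L = A1 + A2 := by
    have e1 : Sᶜ.filter (fun j => j ∈ T) = T \ S := by
      ext j; simp [Finset.mem_filter, Finset.mem_compl, Finset.mem_sdiff, and_comm]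
    have e2 : Sᶜ.filter (fun j => j ∉ T) = Sᶜ \ T := by
      ext j; simp [Finset.mem_filter, Finset.mem_compl, Finset.mem_sdiff]
    rw [hLdef, ← Finset.sum_filter_add_sum_filter_not Sᶜ (fun j => j ∈ T), e1, e2, add_comm]
  set SPv : ℝ := ∑ i ∈ P, v (jsel i) ^ 2 with hSPv
  set SQv : ℝ := ∑ i ∈ Q, v (jsel i) ^ 2 with hSQv
  set SPN : ℝ := ∑ i ∈ P, N i ^ 2 with hSPN
  set SQN : ℝ := ∑ i ∈ Q, N i ^ 2 with hSQN
  set n : ℝ := (Fintype.card I : ℝ) with hn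
  have hns : (s : ℝ) < n := by rw [hn]; exact_mod_cast hcard
  have hsh : (shat : ℝ) ≤ (s : ℝ) := by exact_mod_cast hshat
  have hd : (0 : ℝ) < n - shat := by linarith
  have hns0 : (0 : ℝ) < n - s := by linarith
  have h1c : (0 : ℝ) < 1 + 1 / c := by positivity
  have h4c : (0 : ℝ) < 4 * (1 + c) := by positivity
  -- Step A : bound A2 via the injection φ
  have hA2 : A2 ≤ (1 + 1 / c) * SPv + 4 * (1 + c) * SPN := by
    have hatt : A2 = ∑ x ∈ (T \ S).attach, v x.1 ^ 2 := by
      rw [hA2def, ← Finset.sum_attach (T \ S) (fun j => v j ^ 2)]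
    have hb : ∀ x ∈ (T \ S).attach,
        v x.1 ^ 2 ≤ (1 + 1 / c) * v (jsel (φ x)) ^ 2 + 4 * (1 + c) * N (φ x) ^ 2 :=
      fun x _ => key x.1 (Finset.mem_sdiff.mp x.2).2 (φ x)
    have himg : ∑ i ∈ P, ((1 + 1 / c) * v (jsel i) ^ 2 + 4 * (1 + c) * N i ^ 2)
        = ∑ x ∈ (T \ S).attach,
            ((1 + 1 / c) * v (jsel (φ x)) ^ 2 + 4 * (1 + c) * N (φ x) ^ 2) :=
      Finset.sum_image (fun a _ b _ h => hφinj h)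
    calc A2 = ∑ x ∈ (T \ S).attach, v x.1 ^ 2 := hatt
      _ ≤ ∑ x ∈ (T \ S).attach,
            ((1 + 1 / c) * v (jsel (φ x)) ^ 2 + 4 * (1 + c) * N (φ x) ^ 2) :=
          Finset.sum_le_sum hb
      _ = ∑ i ∈ P, ((1 + 1 / c) * v (jsel i) ^ 2 + 4 * (1 + c) * N i ^ 2) := himg.symm
      _ = (1 + 1 / c) * SPv + 4 * (1 + c) * SPN := by
          rw [Finset.sum_add_distrib, ← Finset.mul_sum, ← Finset.mul_sum]
  -- Step B : averaging over Q
  have hL0 : 0 ≤ L := Finset.sum_nonneg (fun j _ => sq_nonneg _)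
  have hcompl : ((Sᶜ.card : ℕ) : ℝ) = n - s := by
    rw [Finset.card_compl, hScard, Nat.cast_sub hcard.le]
  have hQb : ∀ i ∈ Q, L ≤ (n - s) * ((1 + 1 / c) * v (jsel i) ^ 2 + 4 * (1 + c) * N i ^ 2) := by
    intro i _
    have h := Finset.sum_le_sum (fun j hj =>
      key j (Finset.mem_compl.mp hj) i)
    rw [Finset.sum_const, nsmul_eq_mul, hcompl] at h
    exact h
  have hB : ((s : ℝ) - shat) * L ≤ (n - s) * ((1 + 1 / c) * SQv + 4 * (1 + c) * SQN) := by
    have h := Finset.sum_le_sum hQb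
    rw [Finset.sum_const, nsmul_eq_mul, hQcard, Nat.cast_sub hshat] at h
    calc ((s : ℝ) - shat) * L ≤ ∑ i ∈ Q,
          (n - s) * ((1 + 1 / c) * v (jsel i) ^ 2 + 4 * (1 + c) * N i ^ 2) := h
      _ = (n - s) * ((1 + 1 / c) * SQv + 4 * (1 + c) * SQN) := by
          rw [← Finset.mul_sum, Finset.sum_add_distrib, ← Finset.mul_sum, ← Finset.mul_sum]
  -- the union bound inside Tᶜ
  have himgPQ : ∑ j ∈ (P ∪ Q).image jsel, v j ^ 2 = ∑ i ∈ P ∪ Q, v (jsel i) ^ 2 :=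
    Finset.sum_image (fun a _ b _ h => hinj h)
  have hunion : A1 + (SPv + SQv) ≤ ∑ j ∈ Tᶜ, v j ^ 2 := by
    have hdisj : Disjoint (Sᶜ \ T) ((P ∪ Q).image jsel) := by
      rw [Finset.disjoint_left]
      intro j hj1 hj2
      obtain ⟨i, _, rfl⟩ := Finset.mem_image.mp hj2
      exact (Finset.mem_compl.mp (Finset.mem_sdiff.mp hj1).1)
        (Finset.mem_image_of_mem _ (Finset.mem_univ _))
    have hsub : (Sᶜ \ T) ∪ (P ∪ Q).image jsel ⊆ Tᶜ := by
      intro j hj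
      rcases Finset.mem_union.mp hj with h | h
      · exact Finset.mem_compl.mpr (Finset.mem_sdiff.mp h).2
      · obtain ⟨i, hi, rfl⟩ := Finset.mem_image.mp h
        have hiF : i ∈ F := by
          rcases Finset.mem_union.mp hi with h' | h'
          · exact hPsub h'
          · exact hQF h'
        exact Finset.mem_compl.mpr (hFsel i hiF)
    calc A1 + (SPv + SQv)
        = A1 + ∑ i ∈ P ∪ Q, v (jsel i) ^ 2 := by rw [Finset.sum_union hPQdisj]
      _ = ∑ j ∈ (Sᶜ \ T) ∪ (P ∪ Q).image jsel, v j ^ 2 := by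
          rw [Finset.sum_union hdisj, himgPQ]
      _ ≤ ∑ j ∈ Tᶜ, v j ^ 2 :=
          Finset.sum_le_sum_of_subset_of_nonneg hsub (fun _ _ _ => sq_nonneg _)
  have hTW : ∑ j ∈ Tᶜ, v j ^ 2 ≤ W := by
    have he : ∀ j ∈ Tᶜ, v j ^ 2 = (vhat j - v j) ^ 2 := by
      intro j hj
      have h0 : vhat j = 0 := by
        by_contra h
        exact (Finset.mem_compl.mp hj) (by simp [hTdef, h])
      rw [h0]; ring
    rw [Finset.sum_congr rfl he]
    exact Finset.sum_le_sum_of_subset_of_nonneg (Finset.subset_univ _)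
      (fun _ _ _ => sq_nonneg _)
  have hZb : SPN + SQN ≤ Z := by
    rw [hSPN, hSQN, ← Finset.sum_union hPQdisj]
    exact Finset.sum_le_sum_of_subset_of_nonneg (Finset.subset_univ _)
      (fun _ _ _ => sq_nonneg _)
  -- nonnegativity facts
  have hA10 : 0 ≤ A1 := Finset.sum_nonneg (fun j _ => sq_nonneg _)
  have hSPv0 : 0 ≤ SPv := Finset.sum_nonneg (fun j _ => sq_nonneg _)
  have hSQv0 : 0 ≤ SQv := Finset.sum_nonneg (fun j _ => sq_nonneg _)
  have hSPN0 : 0 ≤ SPN := Finset.sum_nonneg (fun j _ => sq_nonneg _)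
  have hSQN0 : 0 ≤ SQN := Finset.sum_nonneg (fun j _ => sq_nonneg _)
  have hZ0 : 0 ≤ Z := Finset.sum_nonneg (fun j _ => sq_nonneg _)
  have hW0 : 0 ≤ W := Finset.sum_nonneg (fun j _ => sq_nonneg _)
  have hAW : A1 + (SPv + SQv) ≤ W := hunion.trans hTW
  -- main arithmetic assembly
  have hmain : (n - shat) * L ≤ (n - s) * (1 + 1 / c) * W + (n - shat) * (4 * (1 + c)) * Z := by
    have t1 : (n - s) * L ≤ (n - s) * (A1 + ((1 + 1 / c) * SPv + 4 * (1 + c) * SPN)) := by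
      apply mul_le_mul_of_nonneg_left _ hns0.le
      linarith [hA2, hsplit]
    have e1 : (n - shat) * L = (n - s) * L + ((s : ℝ) - shat) * L := by ring
    have u1 : A1 + ((1 + 1 / c) * SPv + 4 * (1 + c) * SPN)
        + ((1 + 1 / c) * SQv + 4 * (1 + c) * SQN)
        ≤ (1 + 1 / c) * (A1 + (SPv + SQv)) + 4 * (1 + c) * (SPN + SQN) := by
      have : 0 ≤ (1 / c) * A1 := by positivity
      nlinarith
    have t2 : (n - s) * (A1 + ((1 + 1 / c) * SPv + 4 * (1 + c) * SPN))
        + (n - s) * ((1 + 1 / c) * SQv + 4 * (1 + c) * SQN)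
        ≤ (n - s) * ((1 + 1 / c) * (A1 + (SPv + SQv)) + 4 * (1 + c) * (SPN + SQN)) := by
      rw [← mul_add]
      exact mul_le_mul_of_nonneg_left u1 hns0.le
    have t3 : (n - s) * ((1 + 1 / c) * (A1 + (SPv + SQv)))
        ≤ (n - s) * ((1 + 1 / c) * W) :=
      mul_le_mul_of_nonneg_left (mul_le_mul_of_nonneg_left hAW h1c.le) hns0.le
    have t4 : (n - s) * (4 * (1 + c) * (SPN + SQN)) ≤ (n - shat) * (4 * (1 + c) * Z) := by
      apply mul_le_mul (by linarith) (mul_le_mul_of_nonneg_left hZb h4c.le)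
        (by positivity) (by linarith)
    have r1 : (n - s) * ((1 + 1 / c) * (A1 + (SPv + SQv)) + 4 * (1 + c) * (SPN + SQN))
        = (n - s) * ((1 + 1 / c) * (A1 + (SPv + SQv)))
          + (n - s) * (4 * (1 + c) * (SPN + SQN)) := by ring
    have r2 : (n - s) * ((1 + 1 / c) * W) = (n - s) * (1 + 1 / c) * W := by ring
    have r3 : (n - shat) * (4 * (1 + c) * Z) = (n - shat) * (4 * (1 + c)) * Z := by ring
    linarith [t1, t2, t3, t4, e1, hB, r1, r2, r3]
  -- conclude by dividing through by n - shat
  rw [hLHS]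
  have hfin : (1 + 1 / c) * ((n - s) / (n - shat)) * W + 4 * (1 + c) * Z
      = ((n - s) * (1 + 1 / c) * W + (n - shat) * (4 * (1 + c)) * Z) / (n - shat) := by
    field_simp
  rw [hfin, le_div_iff₀ hd]
  calc L * (n - shat) = (n - shat) * L := by ring
    _ ≤ (n - s) * (1 + 1 / c) * W + (n - shat) * (4 * (1 + c)) * Z := hmain
end

section
/- Let d, s, s* ∈ ℕ with 1 ≤ s* ≤ s < d, let 0 < c_l < c_u, and let L : ℝ^d → ℝ be differentiable and satisfy, for all β, β' ∈ ℝ^d, (c_l/2)‖β' − β‖₂² ≤ L(β') − L(β) − ⟨∇L(β), β' − β⟩ ≤ (c_u/2)‖β' − β‖₂². Suppose s ≥ 72(c_u/c_l)²·s*, and let β̂ ∈ ℝ^d have at most s* nonzero entries and β^t ∈ ℝ^d have at most s nonzero entries. Define b = β^t − (2/(3c_u))·∇L(β^t); let w_1, …, w_s ∈ ℝ^d be arbitrary noise vectors, let S^{t+1} = {j_1,…,j_s} be selected greedily (j_i maximizes |b_j| + w_i(j) over j ∉ {j_1,…,j_{i−1}}), let w̃ ∈ ℝ^d be arbitrary,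 and set β^{t+1} = b|_{S^{t+1}} + w̃|_{S^{t+1}} (coordinates outside S^{t+1} set to zero). Then there exist constants ρ > 0 and c₃ > 0 depending only on c_l and c_u such that L(β^{t+1}) − L(β̂) ≤ (1 − c_l/(ρ c_u))·(L(β^t) − L(β̂)) + c₃·( ∑_{i=1}^s ‖w_i‖_∞² + ‖w̃|_{S^{t+1}}‖₂² ). -/
/-!
Add the smoothness upper bound for `L(βᵗ⁺¹) - L(βᵗ)` to `ε = c_l / (12 c_u)` times the
strong-convexity upper bound for `L(βᵗ) - L(β̂)`. The result splits into a sum over coordinates,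
and it suffices to bound that sum by the noise. A selected coordinate contributes at most its
noise and, if it lies outside the support of `βᵗ` or of `β̂`, earns a credit proportional to
`b_j²`. A dropped coordinate contributes at most `(3/5) c_u b_j²`, and only when it lies in the
support of `βᵗ` or of `β̂`. The greedy selection guarantees that a dropped coordinate has
`b_j² ≤ (11/10) b_{j_i}² + 44 ‖w_i‖_∞²` for every selected `j_i`. Averaging this over the
selected coordinates outside `supp βᵗ` pays for the dropped coordinates in `supp βᵗ`, since there
are at least as many of the former. Averaging over the at least `s - s*` selected coordinates
outside `supp β̂` pays for the at most `s*` dropped coordinates in `supp β̂`; the ratio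
`s* / (s - s*) ≤ (c_l / c_u)² / 71` makes up for the weak credit `~ c_l² / c_u` there.
-/

open Finset

/-- The `j`-th summand of `(x - y)ᵀ∇L + (c_u/2)‖x - y‖² + ε ((y - z)ᵀ∇L - (c_l/2)‖y - z‖²)` with
`ε = c_l / (12 c_u)`, for the next iterate `x`, the current iterate `y`, the target `z` and the
gradient `g` at `y`. -/
noncomputable def coordGap (c_l c_u x y z g : ℝ) : ℝ :=
  (x - y) * g + c_u / 2 * (x - y) ^ 2 + c_l / (12 * c_u) * ((y - z) * g - c_l / 2 * (y - z) ^ 2)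

section Scalar

variable {c_l c_u b g v y z : ℝ}

lemma coordGap_add_le (hc : 0 < c_u) (hb : b = y - 2 / (3 * c_u) * g) :
    coordGap c_l c_u (b + v) y z g ≤ c_u * v ^ 2 := by
  rw [← sub_nonneg]
  have key : c_u * v ^ 2 - coordGap c_l c_u (b + v) y z g
      = c_u / 4 * v ^ 2 + 7 / (24 * c_u) * g ^ 2 + (2 * g - 3 * c_u * v) ^ 2 / (36 * c_u)
        + (g - c_l * (y - z)) ^ 2 / (24 * c_u) := by
    rw [coordGap, hb]; field_simp; ring
  rw [key]; positivity

lemma coordGap_add_of_iterate_zero_le (hc : 0 < c_u) (hb : b = 0 - 2 / (3 * c_u) * g) :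
    coordGap c_l c_u (b + v) 0 z g ≤ c_u * v ^ 2 - 25 / 32 * c_u * b ^ 2 := by
  have hg : g = -(3 * c_u / 2) * b := by field_simp at hb; linarith
  subst hg
  rw [← sub_nonneg]
  have key : c_u * v ^ 2 - 25 / 32 * c_u * b ^ 2 - coordGap c_l c_u (b + v) 0 z (-(3 * c_u / 2) * b)
      = c_u / 8 * (b + 2 * v) ^ 2 + (3 * c_u / 2 * b - c_l * z) ^ 2 / (24 * c_u) := by
    rw [coordGap]; field_simp; ring
  rw [key]; positivity

lemma coordGap_add_of_target_zero_le (hcl : 0 < c_l) (hcu : c_l ≤ c_u)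
    (hb : b = y - 2 / (3 * c_u) * g) :
    coordGap c_l c_u (b + v) y 0 g ≤ c_u * v ^ 2 - c_l ^ 2 / (96 * c_u) * b ^ 2 := by
  have hc : 0 < c_u := hcl.trans_le hcu
  have hg : g = 3 * c_u / 2 * (y - b) := by rw [hb]; field_simp; ring
  subst hg
  rw [← sub_nonneg]
  have key : c_u * v ^ 2 - c_l ^ 2 / (96 * c_u) * b ^ 2
        - coordGap c_l c_u (b + v) y 0 (3 * c_u / 2 * (y - b))
      = c_u / 8 * (b - y + 2 * v) ^ 2 + (3 * (c_l * y + (6 * c_u - c_l) * (b - y) / 3) ^ 2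
        + (72 * c_u ^ 2 + 4 * c_u * c_l - 4 / 3 * c_l ^ 2) * (b - y) ^ 2) / (96 * c_u) := by
    rw [coordGap]; field_simp; ring
  have hcoef : 0 ≤ 72 * c_u ^ 2 + 4 * c_u * c_l - 4 / 3 * c_l ^ 2 := by nlinarith
  have := mul_nonneg hcoef (sq_nonneg (b - y))
  rw [key]; positivity

lemma coordGap_zero_le (hc : 0 < c_u) (hb : b = y - 2 / (3 * c_u) * g) :
    coordGap c_l c_u 0 y z g ≤ 3 / 5 * c_u * b ^ 2 := by
  have hg : g = 3 * c_u / 2 * (y - b) := by rw [hb]; field_simp; ring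
  subst hg
  rw [← sub_nonneg]
  have key : 3 / 5 * c_u * b ^ 2 - coordGap c_l c_u 0 y z (3 * c_u / 2 * (y - b))
      = (3 * c_u / 2 * (y - b) - c_l * (y - z)) ^ 2 / (24 * c_u)
        + 29 / 32 * c_u * (y - 21 / 29 * b) ^ 2 + 9 / 290 * c_u * b ^ 2 := by
    rw [coordGap]; field_simp; ring
  rw [key]; positivity

lemma coordGap_add_le_ite (hcl : 0 < c_l) (hcu : c_l ≤ c_u) (hb : b = y - 2 / (3 * c_u) * g) :
    coordGap c_l c_u (b + v) y z g ≤ c_u * v ^ 2 - 33 / 50 * c_u * (if y = 0 then b ^ 2 else 0)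
      - 33 / 3550 * (c_l ^ 2 / c_u) * (if z = 0 then b ^ 2 else 0) := by
  have hc : 0 < c_u := hcl.trans_le hcu
  have hratio : c_l ^ 2 / c_u ≤ c_u := by rw [div_le_iff₀ hc]; nlinarith
  have hb2 := sq_nonneg b
  split_ifs with hy hz hz
  · subst hy hz
    have := coordGap_add_of_iterate_zero_le (c_l := c_l) (v := v) (z := 0) hc hb
    nlinarith [mul_le_mul_of_nonneg_right hratio hb2]
  · subst hy
    have := coordGap_add_of_iterate_zero_le (c_l := c_l) (v := v) (z := z) hc hb
    nlinarith
  · subst hz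
    have := coordGap_add_of_target_zero_le (v := v) hcl hcu hb
    have : c_l ^ 2 / (96 * c_u) * b ^ 2 = c_l ^ 2 / c_u * b ^ 2 / 96 := by ring
    have : 0 ≤ c_l ^ 2 / c_u * b ^ 2 := by positivity
    linarith
  · simpa using coordGap_add_le (c_l := c_l) (v := v) (z := z) hc hb

lemma coordGap_zero_le_ite (hc : 0 < c_u) (hb : b = y - 2 / (3 * c_u) * g) :
    coordGap c_l c_u 0 y z g ≤
      3 / 5 * c_u * ((if y ≠ 0 then b ^ 2 else 0) + (if z ≠ 0 then b ^ 2 else 0)) := by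
  have hD := coordGap_zero_le (c_l := c_l) (z := z) hc hb
  have hb2 : 0 ≤ 3 / 5 * c_u * b ^ 2 := by positivity
  split_ifs with hy hz hz
  · linarith
  · linarith
  · linarith
  · rw [not_not] at hy hz; subst hy hz; simp [coordGap]

end Scalar

lemma card_mul_sum_le_card_mul_sum {α β : Type*} {Y : Finset α} {Q : Finset β} {f : α → ℝ}
    {g : β → ℝ} (h : ∀ y ∈ Y, ∀ q ∈ Q, f y ≤ g q) :
    #Q * ∑ y ∈ Y, f y ≤ #Y * ∑ q ∈ Q, g q := by
  calc #Q * ∑ y ∈ Y, f y = ∑ y ∈ Y, ∑ _q ∈ Q, f y := by simp [mul_sum]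
    _ ≤ ∑ _y ∈ Y, ∑ q ∈ Q, g q := sum_le_sum fun y hy => sum_le_sum fun q hq => h y hy q hq
    _ = #Y * ∑ q ∈ Q, g q := by simp

lemma sq_le_of_abs_le_abs_add {x a c : ℝ} (h : |x| ≤ |a| + 2 * c) :
    x ^ 2 ≤ 11 / 10 * a ^ 2 + 44 * c ^ 2 := by
  have hsq : x ^ 2 ≤ (|a| + 2 * c) ^ 2 := by
    rw [← sq_abs x]; exact pow_le_pow_left₀ (abs_nonneg x) h 2
  nlinarith [sq_nonneg (|a| - 20 * c), sq_abs a]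

lemma le_mul_sub_of_sparsity {c_l c_u n m : ℝ} (hcl : 0 < c_l) (hcu : c_l ≤ c_u) (hn : 0 ≤ n)
    (h : 72 * (c_u / c_l) ^ 2 * n ≤ m) : n ≤ c_l ^ 2 / (71 * c_u ^ 2) * (m - n) := by
  have hκ : 1 ≤ (c_u / c_l) ^ 2 := one_le_pow₀ ((one_le_div hcl).mpr hcu)
  have : c_l ^ 2 / (71 * c_u ^ 2) = 1 / (71 * (c_u / c_l) ^ 2) := by
    have := hcl.trans_le hcu; field_simp
  rw [this, one_div_mul_eq_div, le_div_iff₀ (by positivity)]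
  nlinarith

section Selection

variable {ι : Type*} [DecidableEq ι] {s : ℕ} {b : ι → ℝ} {w : Fin s → ι → ℝ} {jsel : Fin s → ι}

def IsNoisyGreedySelection (b : ι → ℝ) (w : Fin s → ι → ℝ) (jsel : Fin s → ι) : Prop :=
  ∀ i k, (∀ i' < i, jsel i' ≠ k) → |b k| + w i k ≤ |b (jsel i)| + w i (jsel i)

lemma IsNoisyGreedySelection.sq_le [Fintype ι] (hsel : IsNoisyGreedySelection b w jsel) {j : ι}
    (hj : j ∉ univ.image jsel) (i : Fin s) :
    b j ^ 2 ≤ 11 / 10 * b (jsel i) ^ 2 + 44 * (⨆ k, |w i k|) ^ 2 := by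
  have hle : ∀ k, |w i k| ≤ ⨆ k, |w i k| :=
    le_ciSup (f := fun k => |w i k|) (Finite.bddAbove_range _)
  have hgreedy := hsel i j fun i' _ he => hj (mem_image.mpr ⟨i', mem_univ _, he⟩)
  refine sq_le_of_abs_le_abs_add ?_
  linarith [hle j, hle (jsel i), le_abs_self (w i (jsel i)), neg_abs_le (w i j)]

lemma card_filter_notMem_add_card_inter (hinj : Function.Injective jsel) (A : Finset ι) :
    #{i | jsel i ∉ A} + #(univ.image jsel ∩ A) = s := by
  have : #(univ.image jsel ∩ A) = #{i | jsel i ∈ A} := by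
    rw [← filter_mem_eq_inter, filter_image, card_image_of_injective _ hinj]
  rw [this, add_comm, card_filter_add_card_filter_not, card_univ, Fintype.card_fin]

lemma IsNoisyGreedySelection.sum_sq_le [Fintype ι] (hsel : IsNoisyGreedySelection b w jsel)
    (hinj : Function.Injective jsel) {Y A : Finset ι} (hY : Disjoint Y (univ.image jsel))
    {c : ℝ} (hc : 0 ≤ c) (hcard : (#Y : ℝ) ≤ c * #{i | jsel i ∉ A}) :
    ∑ j ∈ Y, b j ^ 2 ≤
      c * (11 / 10 * ∑ j ∈ univ.image jsel \ A, b j ^ 2 + 44 * ∑ i, (⨆ k, |w i k|) ^ 2) := by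
  set Q : Finset (Fin s) := {i | jsel i ∉ A}
  set R := 11 / 10 * ∑ j ∈ univ.image jsel \ A, b j ^ 2 + 44 * ∑ i, (⨆ k, |w i k|) ^ 2
  have hR : 0 ≤ R := by positivity
  have havg : #Q * ∑ j ∈ Y, b j ^ 2 ≤
      #Y * ∑ i ∈ Q, (11 / 10 * b (jsel i) ^ 2 + 44 * (⨆ k, |w i k|) ^ 2) :=
    card_mul_sum_le_card_mul_sum fun j hj i _ => hsel.sq_le (disjoint_left.mp hY hj) i
  have hQR : ∑ i ∈ Q, (11 / 10 * b (jsel i) ^ 2 + 44 * (⨆ k, |w i k|) ^ 2) ≤ R := by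
    rw [sum_add_distrib, ← mul_sum, ← mul_sum,
      ← sum_image (f := fun j => b j ^ 2) fun _ _ _ _ h => hinj h]
    show _ ≤ 11 / 10 * _ + 44 * _
    gcongr
    · intro j hj
      obtain ⟨i, hi, rfl⟩ := mem_image.mp hj
      simp only [Q, mem_filter, mem_univ, true_and] at hi
      exact mem_sdiff.mpr ⟨mem_image_of_mem _ (mem_univ _), hi⟩
    · exact subset_univ _
  rcases (Nat.cast_nonneg #Q : (0 : ℝ) ≤ #Q).eq_or_lt with hQ | hQ
  · rw [← hQ, mul_zero] at hcard
    have hY0 : Y = ∅ := card_eq_zero.mp (by exact_mod_cast hcard.antisymm (Nat.cast_nonneg _))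
    simp only [hY0, sum_empty]; positivity
  · refine le_of_mul_le_mul_left ?_ hQ
    calc (#Q : ℝ) * ∑ j ∈ Y, b j ^ 2 ≤ #Y * R := havg.trans (by gcongr)
      _ ≤ c * #Q * R := by gcongr
      _ = #Q * (c * R) := by ring

lemma IsNoisyGreedySelection.sum_sq_sdiff_le [Fintype ι]
    (hsel : IsNoisyGreedySelection b w jsel) (hinj : Function.Injective jsel) {T : Finset ι}
    (hT : #T ≤ s) :
    ∑ j ∈ T \ univ.image jsel, b j ^ 2 ≤
      11 / 10 * ∑ j ∈ univ.image jsel \ T, b j ^ 2 + 44 * ∑ i, (⨆ k, |w i k|) ^ 2 := by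
  have h1 := card_filter_notMem_add_card_inter hinj T
  have h2 := card_sdiff_add_card_inter T (univ.image jsel)
  rw [inter_comm] at h2
  have hcard : (#(T \ univ.image jsel) : ℝ) ≤ 1 * #{i | jsel i ∉ T} := by
    rw [one_mul]; exact_mod_cast (by omega : #(T \ univ.image jsel) ≤ #{i | jsel i ∉ T})
  simpa only [one_mul] using hsel.sum_sq_le hinj sdiff_disjoint zero_le_one hcard

lemma IsNoisyGreedySelection.sum_sq_sdiff_le_of_sparsity [Fintype ι]
    (hsel : IsNoisyGreedySelection b w jsel) (hinj : Function.Injective jsel) {c_l c_u : ℝ}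
    (hcl : 0 < c_l) (hcu : c_l ≤ c_u) {sstar : ℕ} (hs : 72 * (c_u / c_l) ^ 2 * sstar ≤ s)
    {S : Finset ι} (hS : #S ≤ sstar) :
    ∑ j ∈ S \ univ.image jsel, b j ^ 2 ≤ c_l ^ 2 / (71 * c_u ^ 2) *
      (11 / 10 * ∑ j ∈ univ.image jsel \ S, b j ^ 2 + 44 * ∑ i, (⨆ k, |w i k|) ^ 2) := by
  refine hsel.sum_sq_le hinj sdiff_disjoint (by positivity) ?_
  have h1 := card_filter_notMem_add_card_inter hinj S
  have h2 : #(S \ univ.image jsel) ≤ sstar := (card_le_card sdiff_subset).trans hS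
  have h3 : #(univ.image jsel ∩ S) ≤ sstar := (card_le_card inter_subset_right).trans hS
  have h4 : (s : ℝ) - sstar ≤ #{i | jsel i ∉ S} := by
    rw [sub_le_iff_le_add]; exact_mod_cast (by omega : s ≤ #{i | jsel i ∉ S} + sstar)
  calc (#(S \ univ.image jsel) : ℝ) ≤ sstar := by exact_mod_cast h2
    _ ≤ c_l ^ 2 / (71 * c_u ^ 2) * (s - sstar) :=
      le_mul_sub_of_sparsity hcl hcu (Nat.cast_nonneg sstar) hs
    _ ≤ _ := by gcongr

theorem sum_coordGap_le [Fintype ι] {c_l c_u : ℝ} (hcl : 0 < c_l) (hcu : c_l ≤ c_u) {sstar : ℕ}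
    (hs : 72 * (c_u / c_l) ^ 2 * sstar ≤ s) {x y z g v : ι → ℝ}
    (hz : #{j | z j ≠ 0} ≤ sstar) (hy : #{j | y j ≠ 0} ≤ s)
    (hb : ∀ j, b j = y j - 2 / (3 * c_u) * g j) (hinj : Function.Injective jsel)
    (hsel : IsNoisyGreedySelection b w jsel)
    (hx : ∀ j, x j = if j ∈ univ.image jsel then b j + v j else 0) :
    ∑ j, coordGap c_l c_u (x j) (y j) (z j) (g j) ≤
      27 * c_u * (∑ i, (⨆ k, |w i k|) ^ 2 + ∑ j ∈ univ.image jsel, v j ^ 2) := by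
  have hc : 0 < c_u := hcl.trans_le hcu
  set I := univ.image jsel
  set T : Finset ι := {j | y j ≠ 0}
  set S : Finset ι := {j | z j ≠ 0}
  set W := ∑ i, (⨆ k, |w i k|) ^ 2
  -- The credits `33/50 = (3/5)(11/10)` and `33/3550 = (3/5)(11/10)/71` are exactly what
  -- `hT` and `hS` below charge to the selected coordinates outside `T` and `S`.
  have hpt : ∀ j, coordGap c_l c_u (x j) (y j) (z j) (g j) ≤
      c_u * (if j ∈ I then v j ^ 2 else 0)
      + 3 / 5 * c_u * ((if j ∈ T \ I then b j ^ 2 else 0) + (if j ∈ S \ I then b j ^ 2 else 0))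
      - 33 / 50 * c_u * (if j ∈ I \ T then b j ^ 2 else 0)
      - 33 / 3550 * (c_l ^ 2 / c_u) * (if j ∈ I \ S then b j ^ 2 else 0) := by
    intro j
    rw [hx j]
    by_cases hj : j ∈ I
    · simpa [hj, T, S] using coordGap_add_le_ite (v := v j) (z := z j) hcl hcu (hb j)
    · simpa [hj, T, S] using coordGap_zero_le_ite (c_l := c_l) (z := z j) hc (hb j)
  have hT := hsel.sum_sq_sdiff_le hinj hy
  have hS := hsel.sum_sq_sdiff_le_of_sparsity hinj hcl hcu hs hz
  have hsum := sum_le_sum fun j (_ : j ∈ univ) => hpt j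
  simp only [sum_add_distrib, sum_sub_distrib, ← mul_sum, Fintype.sum_ite_mem] at hsum
  have hT' := mul_le_mul_of_nonneg_left hT (by positivity : (0 : ℝ) ≤ 3 / 5 * c_u)
  have hS' := mul_le_mul_of_nonneg_left hS (by positivity : (0 : ℝ) ≤ 3 / 5 * c_u)
  have hS'_eq : 3 / 5 * c_u * (c_l ^ 2 / (71 * c_u ^ 2) * (11 / 10 * ∑ j ∈ I \ S, b j ^ 2 + 44 * W))
      = 33 / 3550 * (c_l ^ 2 / c_u) * ∑ j ∈ I \ S, b j ^ 2 + 132 / 355 * (c_l ^ 2 / c_u * W) := by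
    field_simp; ring
  have hW : c_l ^ 2 / c_u * W ≤ c_u * W :=
    mul_le_mul_of_nonneg_right (by rw [div_le_iff₀ hc]; nlinarith) (by positivity)
  have : 0 ≤ c_u * W := by positivity
  have : 0 ≤ c_u * ∑ j ∈ I, v j ^ 2 := by positivity
  linarith

end Selection

section Coordinates

variable {ι : Type*} [Fintype ι] [DecidableEq ι]

lemma ContinuousLinearMap.apply_eq_sum_mul_single (φ : (ι → ℝ) →L[ℝ] ℝ) (v : ι → ℝ) :
    φ v = ∑ j, v j * φ (Pi.single j 1) := by
  conv_lhs => rw [← Finset.univ_sum_single v]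
  refine (map_sum φ _ _).trans (sum_congr rfl fun j _ => ?_)
  rw [← smul_eq_mul, ← map_smul, ← Pi.single_smul, smul_eq_mul, mul_one]

variable {L : (ι → ℝ) → ℝ} {c : ℝ} {β β' : ι → ℝ}

lemma sub_le_sum_of_le_quadratic
    (h : L β' - L β - fderiv ℝ L β (β' - β) ≤ c / 2 * ∑ j, (β' j - β j) ^ 2) :
    L β' - L β ≤ ∑ j, ((β' j - β j) * fderiv ℝ L β (Pi.single j 1) + c / 2 * (β' j - β j) ^ 2) := by
  rw [(fderiv ℝ L β).apply_eq_sum_mul_single] at h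
  simp only [sum_add_distrib, ← mul_sum, Pi.sub_apply] at h ⊢
  linarith

lemma sub_le_sum_of_quadratic_le
    (h : c / 2 * ∑ j, (β' j - β j) ^ 2 ≤ L β' - L β - fderiv ℝ L β (β' - β)) :
    L β - L β' ≤ ∑ j, ((β j - β' j) * fderiv ℝ L β (Pi.single j 1) - c / 2 * (β j - β' j) ^ 2) := by
  rw [(fderiv ℝ L β).apply_eq_sum_mul_single] at h
  have hsq : ∑ j, (β' j - β j) ^ 2 = ∑ j, (β j - β' j) ^ 2 := sum_congr rfl fun j _ => by ring
  have hlin : ∑ j, (β' - β) j * fderiv ℝ L β (Pi.single j 1) =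
      -∑ j, (β j - β' j) * fderiv ℝ L β (Pi.single j 1) := by
    rw [← sum_neg_distrib]; exact sum_congr rfl fun j _ => by simp only [Pi.sub_apply]; ring
  rw [hlin, hsq] at h
  simp only [sum_sub_distrib, ← mul_sum]
  linarith

lemma sub_le_add_sum_coordGap {c_l c_u : ℝ} (hcl : 0 ≤ c_l) (hc : 0 ≤ c_u) {βnext βhat : ι → ℝ}
    (hup : L βnext - L β - fderiv ℝ L β (βnext - β) ≤ c_u / 2 * ∑ j, (βnext j - β j) ^ 2)
    (hlow : c_l / 2 * ∑ j, (βhat j - β j) ^ 2 ≤ L βhat - L β - fderiv ℝ L β (βhat - β)) :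
    L βnext - L βhat ≤ (1 - c_l / (12 * c_u)) * (L β - L βhat) +
      ∑ j, coordGap c_l c_u (βnext j) (β j) (βhat j) (fderiv ℝ L β (Pi.single j 1)) := by
  have hdescent := sub_le_sum_of_le_quadratic hup
  have hconvex := mul_le_mul_of_nonneg_left (sub_le_sum_of_quadratic_le hlow)
    (by positivity : 0 ≤ c_l / (12 * c_u))
  simp only [coordGap, sum_add_distrib, mul_sum] at hdescent hconvex ⊢
  linarith

end Coordinates

/-- One-step progress lemma for noisy iterative hard thresholding: under restricted strong
convexity/smoothness with parameters `c_l < c_u` and `s ≥ 72 (c_u/c_l)² s*`, one gradient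
step `b = βᵗ − (2/(3c_u))∇L(βᵗ)` followed by noisy greedy selection of `s` coordinates and
addition of noise `w̃` on the selected support yields, for constants `ρ, c₃ > 0` depending
only on `c_l, c_u`,
`L(βᵗ⁺¹) − L(β̂) ≤ (1 − c_l/(ρ c_u))(L(βᵗ) − L(β̂)) + c₃(∑ᵢ‖wᵢ‖_∞² + ‖w̃|_S‖₂²)`. -/
theorem noisy_iht_progress (c_l c_u : ℝ) (hcl : 0 < c_l) (hcu : c_l < c_u) :
    ∃ ρ c₃ : ℝ, 0 < ρ ∧ 0 < c₃ ∧
    ∀ (d s sstar : ℕ) (L : (Fin d → ℝ) → ℝ)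
      (βhat βt : Fin d → ℝ) (w : Fin s → Fin d → ℝ) (wt : Fin d → ℝ)
      (jsel : Fin s → Fin d) (b βnext : Fin d → ℝ),
      1 ≤ sstar → sstar ≤ s → s < d →
      Differentiable ℝ L →
      (∀ β β' : Fin d → ℝ,
        c_l / 2 * ∑ j, (β' j - β j) ^ 2 ≤ L β' - L β - fderiv ℝ L β (β' - β)) →
      (∀ β β' : Fin d → ℝ,
        L β' - L β - fderiv ℝ L β (β' - β) ≤ c_u / 2 * ∑ j, (β' j - β j) ^ 2) →
      (s : ℝ) ≥ 72 * (c_u / c_l) ^ 2 * (sstar : ℝ) →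
      (Finset.univ.filter fun j => βhat j ≠ 0).card ≤ sstar →
      (Finset.univ.filter fun j => βt j ≠ 0).card ≤ s →
      (∀ j, b j = βt j - (2 / (3 * c_u)) * fderiv ℝ L βt (Pi.single j 1)) →
      Function.Injective jsel →
      (∀ i : Fin s, ∀ k : Fin d, (∀ i' : Fin s, i' < i → jsel i' ≠ k) →
        |b k| + w i k ≤ |b (jsel i)| + w i (jsel i)) →
      (∀ j, βnext j =
        if j ∈ Finset.image jsel Finset.univ then b j + wt j else 0) →
      L βnext - L βhat ≤
        (1 - c_l / (ρ * c_u)) * (L βt - L βhat) +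
          c₃ * ((∑ i, (⨆ j, |w i j|) ^ 2) +
            ∑ j ∈ Finset.image jsel Finset.univ, (wt j) ^ 2) := by
  have hc : 0 < c_u := hcl.trans hcu
  refine ⟨12, 27 * c_u, by norm_num, by positivity, ?_⟩
  intro d s sstar L βhat βt w wt jsel b βnext _ _ _ _ hlow hup hs hβhat hβt hb hinj hsel hnext
  have hgap := sum_coordGap_le hcl hcu.le hs hβhat hβt hb hinj hsel hnext
  have hsplit := sub_le_add_sum_coordGap hcl.le hc.le (hup βt βnext) (hlow βt βhat)
  linarith
end

section
/- Let ζ ∈ (0,1], τ > 0, and v ≥ 0. Let ε be a real random variable on a probability space with E[ε] = 0 and E[|ε|^{1+ζ}] ≤ v < ∞. Then the truncated (Huber-score) mean satisfies |E[ψ_τ(ε)]| ≤ v·τ^{−ζ}, where ψ_τ(x) = sign(x)·min(|x|, τ). -/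
open Real MeasureTheory

lemma real_sign_mul_abs (x : ℝ) : Real.sign x * |x| = x := by
  rcases lt_trichotomy x 0 with h | h | h
  · rw [Real.sign_of_neg h, abs_of_neg h]; ring
  · simp [h]
  · rw [Real.sign_of_pos h, abs_of_pos h]; ring

lemma psiTau_eq_clamp (τ x : ℝ) (hτ : 0 < τ) : psiTau τ x = max (min x τ) (-τ) := by
  rcases lt_trichotomy x 0 with h | h | h
  · rw [psiTau, Real.sign_of_neg h, abs_of_neg h, min_eq_left (by linarith : x ≤ τ),
      show x = -(-x) by ring, max_neg_neg]
    ring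
  · have h0 : max (min (0:ℝ) τ) (-τ) = 0 := by
      rw [min_eq_left hτ.le, max_eq_left (by linarith)]
    simp [psiTau, h, h0]
  · rw [psiTau, Real.sign_of_pos h, abs_of_pos h, one_mul,
      max_eq_left (le_min (by linarith) (by linarith))]

lemma psiTau_key (ζ τ : ℝ) (hζ : 0 < ζ) (hτ : 0 < τ) (x : ℝ) :
    |psiTau τ x - x| ≤ |x| ^ (1 + ζ) * τ ^ (-ζ) := by
  have hRHS : 0 ≤ |x| ^ (1 + ζ) * τ ^ (-ζ) :=
    mul_nonneg (Real.rpow_nonneg (abs_nonneg x) _) (Real.rpow_nonneg hτ.le _)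
  rcases eq_or_ne x 0 with hx | hx
  · simp only [psiTau, hx, Real.sign_zero, zero_mul, zero_sub, abs_neg, abs_zero, abs_nonneg]
    positivity
  rcases le_or_gt |x| τ with hle | hlt
  · have : psiTau τ x = x := by
      simp [psiTau, min_eq_left hle, real_sign_mul_abs x]
    simpa [this] using hRHS
  · have hxpos : 0 < |x| := abs_pos.mpr hx
    have hψ : psiTau τ x = Real.sign x * τ := by
      simp [psiTau, min_eq_right hlt.le]
    have hsignabs : |Real.sign x| = 1 := by
      rcases lt_or_gt_of_ne hx with h | h
      · simp [Real.sign_of_neg h]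
      · simp [Real.sign_of_pos h]
    have habs : |psiTau τ x - x| = |x| - τ := by
      have : psiTau τ x - x = Real.sign x * (τ - |x|) := by
        rw [hψ, mul_sub, real_sign_mul_abs x]
      rw [this, abs_mul, hsignabs, one_mul, abs_sub_comm, abs_of_nonneg (by linarith)]
    rw [habs]
    have h1 : τ ^ ζ ≤ |x| ^ ζ := Real.rpow_le_rpow hτ.le hlt.le hζ.le
    have h2 : τ ^ ζ * τ ^ (-ζ) = 1 := by
      rw [← Real.rpow_add hτ]; simp
    have h3 : |x| ^ (1 + ζ) = |x| * |x| ^ ζ := by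
      rw [Real.rpow_add hxpos, Real.rpow_one]
    have h4 : |x| * (τ ^ ζ * τ ^ (-ζ)) ≤ |x| * (|x| ^ ζ * τ ^ (-ζ)) := by
      apply mul_le_mul_of_nonneg_left _ hxpos.le
      exact mul_le_mul_of_nonneg_right h1 (Real.rpow_nonneg hτ.le _)
    rw [h2, mul_one] at h4
    calc |x| - τ ≤ |x| := by linarith
    _ ≤ |x| * (|x| ^ ζ * τ ^ (-ζ)) := h4
    _ = |x| ^ (1 + ζ) * τ ^ (-ζ) := by rw [h3]; ring

/-- Bias bound for the truncated (Huber-score) mean: if `E[ε] = 0` and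
`E[|ε|^(1+ζ)] ≤ v`, then `|E[ψ_τ(ε)]| ≤ v · τ^(−ζ)`. -/
theorem abs_integral_psiTau_le (ζ τ v : ℝ) (hζ : ζ ∈ Set.Ioc (0 : ℝ) 1) (hτ : 0 < τ)
    (hv : 0 ≤ v) {Ω : Type*} [MeasurableSpace Ω] (μ : Measure Ω) [IsProbabilityMeasure μ]
    (ε : Ω → ℝ) (hmeas : Measurable ε)
    (hint : Integrable ε μ)
    (hmom_int : Integrable (fun ω => |ε ω| ^ (1 + ζ)) μ)
    (hmean : ∫ ω, ε ω ∂μ = 0)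
    (hmom : ∫ ω, |ε ω| ^ (1 + ζ) ∂μ ≤ v) :
    |∫ ω, psiTau τ (ε ω) ∂μ| ≤ v * τ ^ (-ζ) := by
  obtain ⟨hζ0, hζ1⟩ := hζ
  have hmeasψ : Measurable fun ω => psiTau τ (ε ω) := by
    have : (fun ω => psiTau τ (ε ω)) = fun ω => max (min (ε ω) τ) (-τ) := by
      funext ω; exact psiTau_eq_clamp τ (ε ω) hτ
    rw [this]
    exact (hmeas.min measurable_const).max measurable_const
  have hbound : ∀ ω, |psiTau τ (ε ω)| ≤ τ := by
    intro ω
    unfold psiTau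
    rw [abs_mul]
    calc |Real.sign (ε ω)| * |min |ε ω| τ| ≤ 1 * τ := by
          apply mul_le_mul
          · rcases lt_trichotomy (ε ω) 0 with h | h | h
            · simp [Real.sign_of_neg h]
            · simp [h]
            · simp [Real.sign_of_pos h]
          · rw [abs_of_nonneg (le_min (abs_nonneg _) hτ.le)]
            exact min_le_right _ _
          · exact abs_nonneg _
          · exact zero_le_one
    _ = τ := one_mul τ
  have hintψ : Integrable (fun ω => psiTau τ (ε ω)) μ :=
    (integrable_const τ).mono' hmeasψ.aestronglyMeasurable
      (Filter.Eventually.of_forall (fun ω => by simpa using hbound ω))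
  have hsub : Integrable (fun ω => psiTau τ (ε ω) - ε ω) μ := hintψ.sub hint
  have heq : ∫ ω, psiTau τ (ε ω) ∂μ = ∫ ω, (psiTau τ (ε ω) - ε ω) ∂μ := by
    rw [integral_sub hintψ hint, hmean, sub_zero]
  rw [heq]
  calc |∫ ω, (psiTau τ (ε ω) - ε ω) ∂μ| ≤ ∫ ω, |psiTau τ (ε ω) - ε ω| ∂μ :=
        by simpa [Real.norm_eq_abs] using
          norm_integral_le_integral_norm (μ := μ) (fun ω => psiTau τ (ε ω) - ε ω)
  _ ≤ ∫ ω, |ε ω| ^ (1 + ζ) * τ ^ (-ζ) ∂μ := by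
      apply integral_mono hsub.abs (hmom_int.mul_const _)
      intro ω
      exact psiTau_key ζ τ hζ0 hτ (ε ω)
  _ = (∫ ω, |ε ω| ^ (1 + ζ) ∂μ) * τ ^ (-ζ) := integral_mul_const _ _
  _ ≤ v * τ ^ (-ζ) := mul_le_mul_of_nonneg_right hmom (Real.rpow_nonneg hτ.le _)
end
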